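/- For all heaps h1 and h2, every heap h in the support of meld h1 h2 satisfies: the multiset of keys of h equals the multiset union of the keys of h1 and the keys of h2; moreover, if h1 and h2 are both min-heap ordered, then so is h. -/
import Mathlib


inductive Heap (α : Type*) where
  | empty : Heap α
  | node (key : α) (left right : Heap α) : Heap α

def Heap.size {α : Type*} : Heap α → ℕ
  | .empty => 1
  | .node _ l r => l.size + r.size

theorem Heap.size_pos {α : Type*} (h : Heap α) : 0 < h.size := by
  induction h with
  | empty => simp [Heap.size]
  | node k l r hl hr => simp [Heap.size]; omega

/-- The multiset of keys of a heap. -/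
def Heap.keys {α : Type*} : Heap α → Multiset α
  | .empty => 0
  | .node k l r => k ::ₘ (l.keys + r.keys)

/-- Min-heap order: each key in a subtree is at least the key at the node. -/
def Heap.IsMinHeap {α : Type*} [LinearOrder α] : Heap α → Prop
  | .empty => True
  | .node k l r =>
      (∀ x ∈ l.keys, k ≤ x) ∧ (∀ x ∈ r.keys, k ≤ x) ∧ l.IsMinHeap ∧ r.IsMinHeap

/-- Randomized meld. -/
noncomputable def meld {α : Type*} [LinearOrder α] : Heap α → Heap α → PMF (Heap α)
  | .empty, h => PMF.pure h
  | .node k1 l1 r1, .empty => PMF.pure (.node k1 l1 r1)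
  | .node k1 l1 r1, .node k2 l2 r2 =>
    if k1 ≤ k2 then
      (PMF.bernoulli (1/2) (by norm_num)).bind fun b =>
        if b then (meld l1 (.node k2 l2 r2)).map fun h => .node k1 h r1
        else (meld r1 (.node k2 l2 r2)).map fun h => .node k1 l1 h
    else
      (PMF.bernoulli (1/2) (by norm_num)).bind fun b =>
        if b then (meld (.node k1 l1 r1) l2).map fun h => .node k2 h r2
        else (meld (.node k1 l1 r1) r2).map fun h => .node k2 l2 h
  termination_by h1 h2 => h1.size + h2.size
  decreasing_by
    · have := Heap.size_pos r1; simp [Heap.size]; omega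
    · have := Heap.size_pos l1; simp [Heap.size]; omega
    · have := Heap.size_pos r2; simp [Heap.size]; omega
    · have := Heap.size_pos l2; simp [Heap.size]; omega


lemma Heap.IsMinHeap.le_keys {α : Type*} [LinearOrder α] {k : α} {l r : Heap α}
    (H : (Heap.node k l r).IsMinHeap) : ∀ x ∈ (Heap.node k l r).keys, k ≤ x := by
  intro x hx
  simp only [Heap.keys, Multiset.mem_cons, Multiset.mem_add] at hx
  rcases hx with rfl | hx | hx
  · exact le_rfl
  · exact H.1 x hx
  · exact H.2.1 x hx

theorem meld_correct {α : Type*} [LinearOrder α] (h1 h2 : Heap α) (h : Heap α)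
    (hmem : h ∈ (meld h1 h2).support) :
    h.keys = h1.keys + h2.keys ∧
    (h1.IsMinHeap → h2.IsMinHeap → h.IsMinHeap) := by
  induction h1, h2 using meld.induct generalizing h with
  | case1 h2 =>
    rw [meld] at hmem
    simp only [PMF.support_pure, Set.mem_singleton_iff] at hmem
    subst hmem
    simp [Heap.keys]
  | case2 k1 l1 r1 =>
    rw [meld] at hmem
    simp only [PMF.support_pure, Set.mem_singleton_iff] at hmem
    subst hmem
    exact ⟨by simp [Heap.keys], fun a _ => a⟩
  | case3 k1 l1 r1 k2 l2 r2 hle IHl IHr =>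
    rw [meld, if_pos hle] at hmem
    rw [PMF.mem_support_bind_iff] at hmem
    obtain ⟨b, -, hb⟩ := hmem
    cases b <;> simp only [if_true, if_false, Bool.false_eq_true, PMF.support_map,
      Set.mem_image] at hb
    · -- false branch: node k1 l1 h'
      obtain ⟨h', hh', rfl⟩ := hb
      obtain ⟨hk, hH⟩ := IHr h' hh'
      constructor
      · simp only [Heap.keys, hk, ← Multiset.singleton_add]
        abel
      · intro H1 H2
        have hle2 := H2.le_keys
        obtain ⟨Hl1, Hr1, Hml1, Hmr1⟩ := H1
        refine ⟨Hl1, ?_, Hml1, hH Hmr1 H2⟩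
        intro x hx
        rw [hk, Multiset.mem_add] at hx
        rcases hx with hx | hx
        · exact Hr1 x hx
        · exact le_trans hle (hle2 x hx)
    · obtain ⟨h', hh', rfl⟩ := hb
      obtain ⟨hk, hH⟩ := IHl h' hh'
      constructor
      · simp only [Heap.keys, hk, ← Multiset.singleton_add]
        abel
      · intro H1 H2
        have hle2 := H2.le_keys
        obtain ⟨Hl1, Hr1, Hml1, Hmr1⟩ := H1
        refine ⟨?_, Hr1, hH Hml1 H2, Hmr1⟩
        intro x hx
        rw [hk, Multiset.mem_add] at hx
        rcases hx with hx | hx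
        · exact Hl1 x hx
        · exact le_trans hle (hle2 x hx)
  | case4 k1 l1 r1 k2 l2 r2 hle IHl IHr =>
    have hle' : k2 ≤ k1 := le_of_not_ge hle
    rw [meld, if_neg hle] at hmem
    rw [PMF.mem_support_bind_iff] at hmem
    obtain ⟨b, -, hb⟩ := hmem
    cases b <;> simp only [if_true, if_false, Bool.false_eq_true, PMF.support_map,
      Set.mem_image] at hb
    · obtain ⟨h', hh', rfl⟩ := hb
      obtain ⟨hk, hH⟩ := IHr h' hh'
      constructor
      · simp only [Heap.keys, hk, ← Multiset.singleton_add]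
        abel
      · intro H1 H2
        have hle1 := H1.le_keys
        obtain ⟨Hl2, Hr2, Hml2, Hmr2⟩ := H2
        refine ⟨Hl2, ?_, Hml2, hH H1 Hmr2⟩
        intro x hx
        rw [hk, Multiset.mem_add] at hx
        rcases hx with hx | hx
        · exact le_trans hle' (hle1 x hx)
        · exact Hr2 x hx
    · obtain ⟨h', hh', rfl⟩ := hb
      obtain ⟨hk, hH⟩ := IHl h' hh'
      constructor
      · simp only [Heap.keys, hk, ← Multiset.singleton_add]
        abel
      · intro H1 H2
        have hle1 := H1.le_keys
        obtain ⟨Hl2, Hr2, Hml2, Hmr2⟩ := H2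
        refine ⟨?_, Hr2, hH H1 Hml2, Hmr2⟩
        intro x hx
        rw [hk, Multiset.mem_add] at hx
        rcases hx with hx | hx
        · exact le_trans hle' (hle1 x hx)
        · exact Hl2 x hx
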